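/- Let (V; η_1,…,η_k; ω_1,…,ω_k) be a k-contact structure on a finite-dimensional real vector space V and let W ⊆ V be any subspace. Set U := W^{⊥k} and D := U ∩ U^{⊥k} ∩ ⋂_{α=1}^k ker η_α. Then the restrictions of the η_α and ω_α to U descend to well-defined linear functionals and alternating bilinear forms on the quotient U/D, and the descended data constitutes a k-contact structure on U/D; that is, the quotient W^{⊥k} / ((W^{⊥k})^{⊥k} ∩ W^{⊥k} ∩ ⋂_{α=1}^k ker η_α) is a k-contact vector space. -/

import Mathlib

open Module

/-- A `k`-contact structure on a real vector space `V`. -/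
def IsKContactStruct {V : Type*} [AddCommGroup V] [Module ℝ V] {k : ℕ}
    (η : Fin k → (V →ₗ[ℝ] ℝ)) (ω : Fin k → (V →ₗ[ℝ] V →ₗ[ℝ] ℝ)) : Prop :=
  (∀ α (v : V), ω α v v = 0) ∧
  finrank ℝ ↥(⨅ α, LinearMap.ker (η α)) + k = finrank ℝ V ∧
  finrank ℝ ↥(⨅ α, LinearMap.ker (ω α)) = k ∧
  (⨅ α, LinearMap.ker (η α)) ⊓ (⨅ α, LinearMap.ker (ω α)) = ⊥

/-- The `k`-orthogonal `W^{⊥k} = {v : V | ω α (w, v) = 0 for all w ∈ W and all α}`. -/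
def kOrth {V : Type*} [AddCommGroup V] [Module ℝ V] {k : ℕ}
    (ω : Fin k → (V →ₗ[ℝ] V →ₗ[ℝ] ℝ)) (W : Submodule ℝ V) : Submodule ℝ V where
  carrier := {v | ∀ w ∈ W, ∀ α, ω α w v = 0}
  zero_mem' := fun w _ α => map_zero (ω α w)
  add_mem' := by
    intro a b ha hb w hw α
    rw [map_add, ha w hw α, hb w hw α, add_zero]
  smul_mem' := by
    intro c a ha w hw α
    rw [map_smul, ha w hw α, smul_zero]

/-- `D = U ∩ U^{⊥k} ∩ ⋂ ker (η α)` with `U = W^{⊥k}`, regarded as a subspace of `U`. -/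
noncomputable def blackerD {V : Type*} [AddCommGroup V] [Module ℝ V] {k : ℕ}
    (η : Fin k → (V →ₗ[ℝ] ℝ)) (ω : Fin k → (V →ₗ[ℝ] V →ₗ[ℝ] ℝ))
    (W : Submodule ℝ V) : Submodule ℝ ↥(kOrth ω W) :=
  Submodule.comap (kOrth ω W).subtype
    (kOrth ω (kOrth ω W) ⊓ ⨅ α, LinearMap.ker (η α))

/-!
Let `K = ⋂ ker η_α` and `R = ⋂ rad ω_α`, so that `V = K ⊕ R` by the dimension count.
Alternation puts `R` inside every `k`-orthogonal, in particular inside `U = W^{⊥k}` and inside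
the radical `R_U` of the restricted forms, so `K ∩ U` is a complement of `R` in `U`.
On `U`, `D = (K ∩ U) ∩ R_U`, and in `U ⧸ D` the joint kernel of the descended `η`'s and the
joint radical of the descended `ω`'s are `(K ∩ U) ⧸ D` and `R_U ⧸ D`. They meet trivially, the
first has codimension `dim U - dim (K ∩ U) = dim R = k`, and the second has dimension
`dim R_U - dim ((K ∩ U) ∩ R_U) = dim R = k` because `R ⊆ R_U`.
-/

namespace Submodule

variable {K V N : Type*} [DivisionRing K] [AddCommGroup V] [Module K V] [AddCommGroup N]
  [Module K N] [FiniteDimensional K V]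

theorem finrank_comap_of_surjective {f : V →ₗ[K] N} (hf : Function.Surjective f)
    (P : Submodule K N) :
    finrank K (P.comap f) = finrank K P + finrank K (LinearMap.ker f) := by
  have hrange : LinearMap.range (f ∘ₗ (P.comap f).subtype) = P := by
    rw [LinearMap.range_comp, range_subtype, map_comap_eq_of_surjective hf]
  rw [← (f ∘ₗ (P.comap f).subtype).finrank_range_add_finrank_ker, hrange, LinearMap.ker_comp,
    (comapSubtypeEquivOfLe (LinearMap.ker_le_comap f)).finrank_eq]

theorem finrank_inf_add_finrank_of_isCompl {p q r : Submodule K V} (h : IsCompl p q)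
    (hqr : q ≤ r) : finrank K ↥(p ⊓ r) + finrank K q = finrank K r := by
  have hsup : p ⊓ r ⊔ q = r := by
    rw [inf_comm, inf_sup_assoc_of_le p hqr, h.sup_eq_top, inf_top_eq]
  have hinf : p ⊓ r ⊓ q = ⊥ := eq_bot_iff.2 (h.inf_eq_bot ▸ inf_le_inf_right q inf_le_left)
  have := finrank_sup_add_finrank_inf_eq (p ⊓ r) q
  rwa [hsup, hinf, finrank_bot, add_zero, eq_comm] at this

end Submodule

open LinearMap Submodule

section Reduction

variable {M : Type*} [AddCommGroup M] [Module ℝ M] {k : ℕ}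
  (η : Fin k → M →ₗ[ℝ] ℝ) (ω : Fin k → LinearMap.BilinForm ℝ M)

def kerInfRad : Submodule ℝ M := (⨅ α, ker (η α)) ⊓ ⨅ α, ker (ω α)

noncomputable def reducedEta (α : Fin k) : M ⧸ kerInfRad η ω →ₗ[ℝ] ℝ :=
  (kerInfRad η ω).liftQ (η α) (inf_le_left.trans (iInf_le _ α))

variable {ω} in
noncomputable def reducedOmega (hω : ∀ α, (ω α).IsAlt) (α : Fin k) :
    LinearMap.BilinForm ℝ (M ⧸ kerInfRad η ω) :=
  IsRefl.liftQ₂ (ω α) _ (hω α).isRefl (inf_le_right.trans (iInf_le _ α))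

theorem comap_mkQ_iInf_ker_reducedEta :
    (⨅ α, ker (reducedEta η ω α)).comap (kerInfRad η ω).mkQ = ⨅ α, ker (η α) := by
  simp only [comap_iInf, ← ker_comp]
  exact iInf_congr fun α => congrArg ker (Submodule.liftQ_mkQ _ _ _)

variable {ω} in
theorem comap_mkQ_iInf_ker_reducedOmega (hω : ∀ α, (ω α).IsAlt) :
    (⨅ α, ker (reducedOmega η hω α)).comap (kerInfRad η ω).mkQ = ⨅ α, ker (ω α) := by
  ext x
  simp only [mem_comap, mem_iInf, mem_ker, LinearMap.ext_iff, Submodule.Quotient.forall]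
  rfl

variable {η ω} in
theorem isKContactStruct_reduced [FiniteDimensional ℝ M] (hω : ∀ α, (ω α).IsAlt)
    {C : Submodule ℝ M} (hKC : IsCompl (⨅ α, ker (η α)) C) (hCR : C ≤ ⨅ α, ker (ω α))
    (hC : finrank ℝ C = k) :
    IsKContactStruct (reducedEta η ω) (reducedOmega η hω) := by
  have hmkQ := (kerInfRad η ω).mkQ_surjective
  have hη := comap_mkQ_iInf_ker_reducedEta η ω
  have hω' := comap_mkQ_iInf_ker_reducedOmega η hω
  have hkerη := finrank_comap_of_surjective hmkQ (⨅ α, ker (reducedEta η ω α))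
  have hkerω := finrank_comap_of_surjective hmkQ (⨅ α, ker (reducedOmega η hω α))
  rw [ker_mkQ, hη] at hkerη
  rw [ker_mkQ, hω'] at hkerω
  have hM := finrank_add_eq_of_isCompl hKC
  have hKR : finrank ℝ (kerInfRad η ω) + finrank ℝ C = finrank ℝ ↥(⨅ α, ker (ω α)) :=
    finrank_inf_add_finrank_of_isCompl hKC hCR
  have hQ := (kerInfRad η ω).finrank_quotient_add_finrank
  refine ⟨fun α => (Submodule.Quotient.forall _).2 (hω α).self_eq_zero, by omega, by omega, ?_⟩
  refine comap_injective_of_surjective hmkQ ?_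
  rw [comap_inf, hη, hω', comap_bot, ker_mkQ]
  rfl

end Reduction

section Restriction

variable {V : Type*} [AddCommGroup V] [Module ℝ V] {k : ℕ}
  {η : Fin k → V →ₗ[ℝ] ℝ} {ω : Fin k → LinearMap.BilinForm ℝ V}

theorem IsKContactStruct.isCompl [FiniteDimensional ℝ V] (h : IsKContactStruct η ω) :
    IsCompl (⨅ α, ker (η α)) (⨅ α, ker (ω α)) := by
  obtain ⟨-, hK, hR, hKR⟩ := h
  exact (isCompl_iff_disjoint _ _ (by omega)).2 (disjoint_iff.2 hKR)

theorem IsKContactStruct.isCompl_comap_subtype [FiniteDimensional ℝ V]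
    (h : IsKContactStruct η ω) {U : Submodule ℝ V} (hRU : ⨅ α, ker (ω α) ≤ U) :
    IsCompl (⨅ α, ker (η α ∘ₗ U.subtype)) ((⨅ α, ker (ω α)).comap U.subtype) := by
  simpa only [ker_comp, comap_iInf] using
    (isCompl_comap_subtype_of_isCompl_of_le h.isCompl.symm hRU).symm

theorem comap_subtype_iInf_ker_le (U : Submodule ℝ V) :
    (⨅ α, ker (ω α)).comap U.subtype ≤ ⨅ α, ker ((ω α).compl₁₂ U.subtype U.subtype) := by
  intro u hu
  simp only [mem_comap, mem_iInf, mem_ker] at hu ⊢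
  intro α
  ext v
  exact LinearMap.congr_fun (hu α) v

theorem iInf_ker_le_kOrth (hω : ∀ α, (ω α).IsAlt) (W : Submodule ℝ V) :
    ⨅ α, ker (ω α) ≤ kOrth ω W := by
  intro r hr w _ α
  rw [(hω α).eq_iff, (mem_iInf _).1 hr α, LinearMap.zero_apply]

theorem blackerD_eq (hω : ∀ α, (ω α).IsAlt) (W : Submodule ℝ V) :
    blackerD η ω W = kerInfRad (fun α => η α ∘ₗ (kOrth ω W).subtype)
      (fun α => (ω α).compl₁₂ (kOrth ω W).subtype (kOrth ω W).subtype) := by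
  ext u
  simp only [blackerD, kerInfRad, mem_comap, mem_inf, mem_iInf, mem_ker]
  rw [and_comm]
  refine and_congr Iff.rfl ⟨fun hu α => ?_, fun hu w hw α => ?_⟩
  · ext v
    exact (hω α).eq_iff.1 (hu v v.2 α)
  · exact (hω α).eq_iff.1 (LinearMap.congr_fun (hu α) ⟨w, hw⟩)

end Restriction

/-- **The `k`-contact analogue of Blacker's theorem.**  For any subspace `W` of a
`k`-contact vector space, with `U = W^{⊥k}` and
`D = U ∩ U^{⊥k} ∩ ⋂ ker (η α)`, the `η α` and `ω α` descend to the quotient `U ⧸ D`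
and the descended data is a `k`-contact structure on it. -/
theorem blacker_kContact_reduction
    {V : Type*} [AddCommGroup V] [Module ℝ V] [FiniteDimensional ℝ V] {k : ℕ}
    (η : Fin k → (V →ₗ[ℝ] ℝ)) (ω : Fin k → (V →ₗ[ℝ] V →ₗ[ℝ] ℝ))
    (h : IsKContactStruct η ω) (W : Submodule ℝ V) :
    ∃ (ηQ : Fin k → ((↥(kOrth ω W) ⧸ blackerD η ω W) →ₗ[ℝ] ℝ))
      (ωQ : Fin k → ((↥(kOrth ω W) ⧸ blackerD η ω W) →ₗ[ℝ]
        (↥(kOrth ω W) ⧸ blackerD η ω W) →ₗ[ℝ] ℝ)),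
      (∀ α (u : ↥(kOrth ω W)), ηQ α (Submodule.Quotient.mk u) = η α (u : V)) ∧
      (∀ α (u u' : ↥(kOrth ω W)),
        ωQ α (Submodule.Quotient.mk u) (Submodule.Quotient.mk u') = ω α (u : V) (u' : V)) ∧
      IsKContactStruct ηQ ωQ := by
  have hω : ∀ α, (ω α).IsAlt := h.1
  have hRU := iInf_ker_le_kOrth hω W
  have hωU : ∀ α, ((ω α).compl₁₂ (kOrth ω W).subtype (kOrth ω W).subtype).IsAlt :=
    fun α u => hω α u
  rw [blackerD_eq hω W]
  refine ⟨reducedEta _ _, reducedOmega _ hωU, fun _ _ => rfl, fun _ _ _ => rfl,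
    isKContactStruct_reduced hωU (h.isCompl_comap_subtype hRU) (comap_subtype_iInf_ker_le _) ?_⟩
  rw [(comapSubtypeEquivOfLe hRU).finrank_eq, h.2.2.1]
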